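/- arXiv:1201.1676 — 2 statements merged into one kernel-verified Lean document; each statement's English description precedes it below -/
import Mathlib

section
/- Let b₁ > b₂ > 0 and c be reals. If c < b₁ - b₂, then for every n ≥ 2 the complete graph on n nodes uniquely maximizes the social welfare W(g) = Σ_j [ d_j(b₁ - c) + Σ_{w : dist(j,w) > 1} b_{dist(j,w)} ] over all graphs g on n nodes, when benefits satisfy b_i ≤ b₂ for all i ≥ 2. -/
/-- Social welfare of a graph: each node contributes its degree times `b 1 - c`
plus the benefit `b (dist j w)` for each node `w` at distance greater than one
(disconnected pairs have distance `0` in Mathlib and hence contribute nothing). -/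
noncomputable def socialWelfare {n : ℕ} (b : ℕ → ℝ) (c : ℝ)
    (G : SimpleGraph (Fin n)) : ℝ := by
  classical
  exact ∑ j, ((G.degree j : ℝ) * (b 1 - c) +
    ∑ w, if 1 < G.dist j w then b (G.dist j w) else 0)

noncomputable def pairVal {n : ℕ} (b : ℕ → ℝ) (c : ℝ) (G : SimpleGraph (Fin n))
    (j w : Fin n) : ℝ := by
  classical
  exact (if G.Adj j w then b 1 - c else 0) +
    (if 1 < G.dist j w then b (G.dist j w) else 0)

lemma socialWelfare_eq {n : ℕ} (b : ℕ → ℝ) (c : ℝ) (G : SimpleGraph (Fin n)) :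
    socialWelfare b c G = ∑ j, ∑ w, pairVal b c G j w := by
  classical
  unfold socialWelfare pairVal
  congr 1
  ext j
  rw [Finset.sum_add_distrib]
  congr 1
  rw [← Finset.sum_filter]
  rw [Finset.sum_const, ← SimpleGraph.neighborFinset_eq_filter,
    SimpleGraph.card_neighborFinset_eq_degree]
  simp [mul_comm]

lemma pairVal_le {n : ℕ} (b : ℕ → ℝ) (c : ℝ) (h12 : b 1 > b 2) (h2 : b 2 > 0)
    (hb : ∀ i, 2 ≤ i → b i ≤ b 2) (hc : c < b 1 - b 2)
    (G : SimpleGraph (Fin n)) (j w : Fin n) :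
    pairVal b c G j w ≤ pairVal b c (⊤ : SimpleGraph (Fin n)) j w ∧
      (j ≠ w → ¬ G.Adj j w → pairVal b c G j w < pairVal b c ⊤ j w) := by
  have hb2 : b 2 < b 1 - c := by linarith
  by_cases hjw : j = w
  · subst hjw
    simp [pairVal, SimpleGraph.dist_self]
  · have htop : (⊤ : SimpleGraph (Fin n)).Adj j w := by simpa using hjw
    have hdtop : (⊤ : SimpleGraph (Fin n)).dist j w = 1 :=
      SimpleGraph.dist_eq_one_iff_adj.mpr htop
    have hrhs : pairVal b c (⊤ : SimpleGraph (Fin n)) j w = b 1 - c := by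
      simp [pairVal, htop, hdtop]
    rw [hrhs]
    by_cases hadj : G.Adj j w
    · have hd : G.dist j w = 1 := SimpleGraph.dist_eq_one_iff_adj.mpr hadj
      constructor
      · simp [pairVal, hadj, hd]
      · intro _ h; exact absurd hadj h
    · have hlt : pairVal b c G j w < b 1 - c := by
        unfold pairVal
        simp only [hadj, if_false, zero_add]
        by_cases hd : 1 < G.dist j w
        · simp only [hd, if_true]
          exact lt_of_le_of_lt (hb _ hd) hb2
        · simp only [hd, if_false]; linarith
      exact ⟨hlt.le, fun _ _ => hlt⟩

theorem stmt_4 (n : ℕ) (hn : 2 ≤ n) (b : ℕ → ℝ) (c : ℝ)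
    (h12 : b 1 > b 2) (h2 : b 2 > 0) (hb : ∀ i, 2 ≤ i → b i ≤ b 2)
    (hc : c < b 1 - b 2) :
    ∀ G : SimpleGraph (Fin n), G ≠ ⊤ →
      socialWelfare b c G < socialWelfare b c (⊤ : SimpleGraph (Fin n)) := by
  intro G hG
  classical
  obtain ⟨j, w, hjw, hadj⟩ : ∃ j w : Fin n, j ≠ w ∧ ¬ G.Adj j w := by
    by_contra h
    push_neg at h
    apply hG
    ext x y
    simp only [SimpleGraph.top_adj]
    exact ⟨fun hxy => hxy.ne, fun hxy => h x y hxy⟩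
  rw [socialWelfare_eq, socialWelfare_eq, ← Finset.sum_product', ← Finset.sum_product']
  apply Finset.sum_lt_sum
  · intro p _
    exact (pairVal_le b c h12 h2 hb hc G p.1 p.2).1
  · exact ⟨(j, w), Finset.mem_univ _,
      (pairVal_le b c h12 h2 hb hc G j w).2 hjw hadj⟩
end

section
/- Let b₁ > b₂ > b₃ > b₄ > 0 and 0 ≤ γ < 1. If there exists a real c simultaneously satisfying (i) c ≤ b₁ - b₃ + γ(2b₂ + b₃) - (2γ/3)b₄, (ii) c ≤ b₁ - b₃ + γ(b₂ - b₄), and (iii) c ≥ b₁ - b₃ + γ((k-1)b₂ + b₃) for all integers k ≥ 3, then γ = 0 and c = b₁ - b₃. -/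
theorem stmt_9 (b1 b2 b3 b4 γ c : ℝ) (h12 : b1 > b2) (h23 : b2 > b3)
    (h34 : b3 > b4) (h4 : b4 > 0) (hγ0 : 0 ≤ γ) (hγ1 : γ < 1)
    (h1 : c ≤ b1 - b3 + γ * (2 * b2 + b3) - (2 * γ / 3) * b4)
    (h2 : c ≤ b1 - b3 + γ * (b2 - b4))
    (h3' : ∀ k : ℤ, 3 ≤ k → c ≥ b1 - b3 + γ * (((k : ℝ) - 1) * b2 + b3)) :
    γ = 0 ∧ c = b1 - b3 := by
  have h3 := h3' 3 (by norm_num)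
  push_cast at h3
  have hγ : γ = 0 := by nlinarith [mul_nonneg hγ0 (by linarith : (0:ℝ) ≤ b2 + b3 + b4)]
  subst hγ
  constructor
  · rfl
  · linarith [h3']
end
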